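/- Let T be a tree (dendroidally ordered set). For every edge e ∈ T there exists a minimum tuple e^λ ∈ T⁺ with e^λ ≤ e, and e^λ = l_1⋯l_k consists exactly of those leaves l_i of T with l_i ≤_d e. Moreover, a broad relation f_1⋯f_n ≤ e holds in T if and only if: each f_i ≤_d e, the f_i are pairwise ≤_d-incomparable, and f_1^λ ⋯ f_n^λ = e^λ. -/

import Mathlib

universe u

namespace BroadPaper

/-- A broad relation on `X`: a relation between finite unordered tuples
(multisets) over `X` and elements of `X`. -/
abbrev Rel (X : Type u) : Type u := Multiset X → X → Prop

variable {X : Type u} {Y : Type u} {A : Type u} {B : Type u} {Z : Type u}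

/-- Broad transitivity: if `f₁ ⋯ fₙ ≤ e` and `g̲ᵢ ≤ fᵢ` then `g̲₁ ⋯ g̲ₙ ≤ e`,
encoded via a multiset of pairs `(g̲ᵢ, fᵢ)`. -/
def BTrans (r : Rel X) : Prop :=
  ∀ (p : Multiset (Multiset X × X)) (e : X),
    r (p.map Prod.snd) e → (∀ q ∈ p, r q.1 q.2) → r ((p.map Prod.fst).sum) e

/-- A pre-broad poset: reflexivity plus broad transitivity. -/
def IsPreBroad (r : Rel X) : Prop := (∀ e : X, r {e} e) ∧ BTrans r

/-- A (commutative) broad poset: a pre-broad poset satisfying antisymmetry. -/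
def IsBroad (r : Rel X) : Prop :=
  IsPreBroad r ∧ ∀ e f : X, r {e} f → r {f} e → e = f

/-- Simplicity: letters in any broad relation are pairwise distinct. -/
def Simple (r : Rel X) : Prop := ∀ fs e, r fs e → fs.Nodup

/-- The descendant relation `f ≤_d e`. -/
def descends (r : Rel X) (f e : X) : Prop := ∃ fs, r fs e ∧ f ∈ fs

def Comparable (r : Rel X) (f g : X) : Prop := descends r f g ∨ descends r g f

def Incomp (r : Rel X) (f g : X) : Prop := ¬ descends r f g ∧ ¬ descends r g f

/-- Blockwise extension of a broad relation to a relation between tuples: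
`fs ≤ es` iff `fs = f̲₁ ⋯ f̲ₖ`, `es = e₁ ⋯ eₖ` with `f̲ᵢ ≤ eᵢ`. -/
def tupleLE (r : Rel X) (fs es : Multiset X) : Prop :=
  ∃ p : Multiset (Multiset X × X),
    p.map Prod.snd = es ∧ (p.map Prod.fst).sum = fs ∧ ∀ q ∈ p, r q.1 q.2

/-- A leaf: no tuple strictly below `e`. -/
def IsLeaf (r : Rel X) (e : X) : Prop := ¬ ∃ fs, r fs e ∧ fs ≠ ({e} : Multiset X)

/-- `fs` is the maximum tuple strictly below `e` (written `e^↑`).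
If `fs ≠ 0`, `e` is a node; if `fs = 0`, `e` is a stump. -/
def upTuple (r : Rel X) (e : X) (fs : Multiset X) : Prop :=
  (r fs e ∧ fs ≠ ({e} : Multiset X)) ∧
    ∀ gs, r gs e → gs ≠ ({e} : Multiset X) → tupleLE r gs fs

def IsStump (r : Rel X) (e : X) : Prop := upTuple r e 0

/-- A dendroidally ordered set (tree): a finite simple broad poset in which
every element is a leaf, node or stump, with a `≤_d`-maximum (root). -/
def IsTree (r : Rel X) : Prop :=
  IsBroad r ∧ Finite X ∧ Simple r ∧
    (∀ e : X, IsLeaf r e ∨ ∃ fs, upTuple r e fs) ∧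
    ∃ rt : X, ∀ e, descends r e rt

def IsMaxEl (r : Rel X) (e : X) : Prop := ∀ s, descends r e s → s = e

/-- A forestially ordered set (forest): each element has a unique
`≤_d`-maximal element above it. -/
def IsForest (r : Rel X) : Prop :=
  IsBroad r ∧ Finite X ∧ Simple r ∧
    (∀ e : X, IsLeaf r e ∨ ∃ fs, upTuple r e fs) ∧
    ∀ e : X, ∃! rt : X, IsMaxEl r rt ∧ descends r e rt

/-- A map of broad posets: preserves broad relations (letterwise on tuples). -/
def BroadHom (r : Rel X) (r' : Rel Y) (φ : X → Y) : Prop :=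
  ∀ fs e, r fs e → r' (fs.map φ) (φ e)

/-- `rs` is the root tuple: the tuple of `≤_d`-maximal elements (no repeats). -/
def IsRootTuple (r : Rel X) (rs : Multiset X) : Prop :=
  rs.Nodup ∧ ∀ x, x ∈ rs ↔ IsMaxEl r x

/-- Independent map of forests: `φ(r̲_F)·e̲ ≤ r̲_{F'}` for some tuple `e̲`. -/
def Independent (r : Rel X) (r' : Rel Y) (φ : X → Y) : Prop :=
  ∃ (rs : Multiset X) (rs' : Multiset Y) (es : Multiset Y),
    IsRootTuple r rs ∧ IsRootTuple r' rs' ∧ tupleLE r' (rs.map φ + es) rs'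

/-- The (pre-)broad relation generated by a set of generating relations:
closure under reflexivity and broad transitivity. -/
inductive GenRel (gen : Rel X) : Rel X
  | of : ∀ fs e, gen fs e → GenRel gen fs e
  | refl : ∀ e, GenRel gen {e} e
  | btrans : ∀ (p : Multiset (Multiset X × X)) (e : X),
      GenRel gen (p.map Prod.snd) e → (∀ q ∈ p, GenRel gen q.1 q.2) →
      GenRel gen ((p.map Prod.fst).sum) e

/-- Generators of the tensor product `S ⊗ T`: relations `s̲ × t ≤ (s,t)` and
`s × t̲ ≤ (s,t)`. -/
def tensorGen (rS : Rel A) (rT : Rel B) : Rel (A × B) := fun xs x =>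
  (∃ as, rS as x.1 ∧ xs = as.map fun a => (a, x.2)) ∨
  (∃ bs, rT bs x.2 ∧ xs = bs.map fun b => (x.1, b))

/-- The tensor product broad relation on `A × B`. -/
def tensorRel (rS : Rel A) (rT : Rel B) : Rel (A × B) := GenRel (tensorGen rS rT)

/-- Product of tuples: all pairs from `as` and `bs`. -/
def mprod (as : Multiset A) (bs : Multiset B) : Multiset (A × B) :=
  as.bind fun a => bs.map fun b => (a, b)

end BroadPaper

/-!
Let `L e` be the tuple of the leaves below `e`; it exists since `X` is finite. Simplicity
forbids two letters of a tuple from having a common descendant, so for a node `e` with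
`e^↑ = t₁ ⋯ tₖ` the leaves below `e` are the disjoint union of those below the `tᵢ`, and
`L e = L t₁ ⋯ L tₖ`. Well-founded induction along `<_d` then shows that `L e ≤ e` lies below
every tuple `g̲ ≤ e` (for `g̲ ≠ e` go through `g̲ ≤ e^↑`), and any other minimum lies below the
tuple of leaves `L e`, hence equals it.

Conversely, let `f̲` be an antichain below `e` with `f̲^λ = e^λ` and `e ∉ f̲`. Each `fᵢ` lies
below exactly one `tⱼ`; restricting `f̲^λ = e^λ` to the leaves below `tⱼ` gives the same
identity for the `fᵢ` below `tⱼ`, so by induction these form a tuple `≤ tⱼ`, and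
`f̲ ≤ e^↑ ≤ e`.
-/

namespace BroadPaper

section

variable {X : Type u} {r : Rel X}

/-- `ls` is `e^λ`. -/
def IsMinTuple (r : Rel X) (e : X) (ls : Multiset X) : Prop :=
  r ls e ∧ ∀ gs, r gs e → tupleLE r ls gs

def IsLeafTuple (r : Rel X) (e : X) (ls : Multiset X) : Prop :=
  ls.Nodup ∧ ∀ l, l ∈ ls ↔ IsLeaf r l ∧ descends r l e

def StrictDescends (r : Rel X) (f e : X) : Prop := descends r f e ∧ f ≠ e

theorem tupleLE_singleton {ls : Multiset X} {e : X} (h : r ls e) : tupleLE r ls {e} :=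
  ⟨{(ls, e)}, by simp, by simp, by simpa using h⟩

theorem tupleLE_add {a b c d : Multiset X} (hab : tupleLE r a b) (hcd : tupleLE r c d) :
    tupleLE r (a + c) (b + d) := by
  obtain ⟨p, rfl, rfl, hp⟩ := hab
  obtain ⟨q, rfl, rfl, hq⟩ := hcd
  refine ⟨p + q, by simp, by simp, fun x hx => ?_⟩
  rcases Multiset.mem_add.1 hx with h | h
  exacts [hp x h, hq x h]

theorem tupleLE_bind {ι : Type*} (s : Multiset ι) {a b : ι → Multiset X}
    (h : ∀ i ∈ s, tupleLE r (a i) (b i)) : tupleLE r (s.bind a) (s.bind b) := by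
  induction s using Multiset.induction with
  | empty => exact ⟨0, by simp, by simp, by simp⟩
  | cons i s ih =>
    simp only [Multiset.cons_bind]
    exact tupleLE_add (h i (Multiset.mem_cons_self i s))
      (ih fun j hj => h j (Multiset.mem_cons_of_mem hj))

theorem tupleLE.exists_descends {fs es : Multiset X} {f : X} (h : tupleLE r fs es)
    (hf : f ∈ fs) : ∃ e ∈ es, descends r f e := by
  obtain ⟨p, rfl, rfl, hp⟩ := h
  obtain ⟨q, hq, hfq⟩ := Multiset.mem_bind.1 hf
  exact ⟨q.2, Multiset.mem_map_of_mem _ hq, q.1, hp q hq, hfq⟩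

theorem tupleLE.bind_le {gs ts : Multiset X} {g : X → Multiset X} (h : tupleLE r gs ts)
    (hg : ∀ t ∈ ts, ∀ qs, r qs t → tupleLE r (g t) qs) : tupleLE r (ts.bind g) gs := by
  obtain ⟨p, rfl, rfl, hp⟩ := h
  rw [Multiset.bind_map]
  exact tupleLE_bind p fun q hq => hg q.2 (Multiset.mem_map_of_mem _ hq) q.1 (hp q hq)

theorem eq_of_tupleLE_of_forall_isLeaf {fs ls : Multiset X} (hls : ∀ l ∈ ls, IsLeaf r l)
    (h : tupleLE r fs ls) : fs = ls := by
  obtain ⟨p, rfl, rfl, hp⟩ := h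
  have hblock : ∀ q ∈ p, q.1 = {q.2} := fun q hq =>
    not_not.1 fun hne => hls q.2 (Multiset.mem_map_of_mem _ hq) ⟨q.1, hp q hq, hne⟩
  change p.bind Prod.fst = _
  rw [Multiset.bind_congr hblock, ← Multiset.bind_map, Multiset.bind_singleton,
    Multiset.map_id']

theorem rel_bind (hb : BTrans r) {ts : Multiset X} {e : X} {g : X → Multiset X} (h : r ts e)
    (hg : ∀ t ∈ ts, r (g t) t) : r (ts.bind g) e := by
  simpa [Multiset.bind, Multiset.join] using
    hb (ts.map fun t => (g t, t)) e (by simpa using h) (by simpa using hg)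

theorem rel_cons_subst (hr : IsPreBroad r) {gs s : Multiset X} {e f : X} (h : r (f ::ₘ s) e)
    (hg : r gs f) : r (gs + s) e := by
  simpa [Multiset.sum_map_singleton] using
    hr.2 ((gs, f) ::ₘ s.map fun x => ({x}, x)) e (by simpa using h)
      (by simpa using ⟨hg, fun x _ => hr.1 x⟩)

theorem descends_refl (hr : IsPreBroad r) (e : X) : descends r e e :=
  ⟨{e}, hr.1 e, Multiset.mem_singleton_self e⟩

theorem descends_trans (hr : IsPreBroad r) {f g e : X} (hfg : descends r f g)
    (hge : descends r g e) : descends r f e := by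
  obtain ⟨fs, hfs, hf⟩ := hfg
  obtain ⟨gs, hgs, hg⟩ := hge
  obtain ⟨s, rfl⟩ := Multiset.exists_cons_of_mem hg
  exact ⟨fs + s, rel_cons_subst hr hgs hfs, Multiset.mem_add.2 (Or.inl hf)⟩

theorem disjoint_of_rel_cons (hr : IsPreBroad r) (hs : Simple r) {gs s : Multiset X} {e f : X}
    (h : r (f ::ₘ s) e) (hg : r gs f) : Disjoint gs s :=
  (Multiset.nodup_add.1 (hs _ _ (rel_cons_subst hr h hg))).2.2

theorem eq_singleton_of_self_mem (hr : IsPreBroad r) (hs : Simple r) {fs : Multiset X} {e : X}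
    (h : r fs e) (he : e ∈ fs) : fs = {e} := by
  obtain ⟨s, rfl⟩ := Multiset.exists_cons_of_mem he
  obtain ⟨-, rfl⟩ : e ∉ s ∧ s = 0 := by simpa using disjoint_of_rel_cons hr hs h h
  rfl

theorem not_descends_of_rel (hr : IsPreBroad r) (hs : Simple r) {fs : Multiset X} {e a b : X}
    (h : r fs e) (ha : a ∈ fs) (hb : b ∈ fs) (hab : a ≠ b) : ¬ descends r a b := by
  rintro ⟨gs, hgs, hags⟩
  obtain ⟨s, rfl⟩ := Multiset.exists_cons_of_mem hb
  exact Multiset.disjoint_left.1 (disjoint_of_rel_cons hr hs h hgs) hags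
    ((Multiset.mem_cons.1 ha).resolve_left hab)

theorem eq_of_descends_of_descends (hr : IsPreBroad r) (hs : Simple r) {ts : Multiset X}
    {e f t t' : X} (h : r ts e) (ht : t ∈ ts) (ht' : t' ∈ ts) (hft : descends r f t)
    (hft' : descends r f t') : t = t' := by
  by_contra hne
  obtain ⟨s, rfl⟩ := Multiset.exists_cons_of_mem ht
  obtain ⟨s', rfl⟩ :=
    Multiset.exists_cons_of_mem ((Multiset.mem_cons.1 ht').resolve_left (Ne.symm hne))
  obtain ⟨as, has, hfa⟩ := hft
  obtain ⟨bs, hbs, hfb⟩ := hft'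
  have h' : r (t' ::ₘ (as + s')) e := by
    simpa [Multiset.add_cons] using rel_cons_subst hr h has
  exact Multiset.disjoint_left.1 (disjoint_of_rel_cons hr hs h' hbs) hfb
    (Multiset.mem_add.2 (Or.inl hfa))

theorem descends_antisymm (hr : IsBroad r) (hs : Simple r) {e f : X} (hfe : descends r f e)
    (hef : descends r e f) : f = e := by
  obtain ⟨fs, hfs, hf⟩ := hfe
  obtain ⟨es, hes, he⟩ := hef
  obtain ⟨s, rfl⟩ := Multiset.exists_cons_of_mem hf
  have hsub := eq_singleton_of_self_mem hr.1 hs (rel_cons_subst hr.1 hfs hes)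
    (Multiset.mem_add.2 (Or.inl he))
  obtain rfl : es = {e} :=
    (Multiset.le_singleton.1 (hsub ▸ Multiset.le_add_right es s)).resolve_left
      (by rintro rfl; simp at he)
  obtain ⟨-, rfl⟩ := (Multiset.singleton_eq_cons_iff s).1 hsub.symm
  exact hr.2 f e hfs hes

theorem wellFounded_strictDescends [Finite X] (hr : IsBroad r) (hs : Simple r) :
    WellFounded (StrictDescends r) := by
  have : IsTrans X (StrictDescends r) :=
    ⟨fun _ _ _ hab hbc => ⟨descends_trans hr.1 hab.1 hbc.1, fun hac => hab.2
      (descends_antisymm hr hs hab.1 (hac ▸ hbc.1))⟩⟩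
  have : Std.Irrefl (StrictDescends r) := ⟨fun _ h => h.2 rfl⟩
  exact Finite.wellFounded_of_trans_of_irrefl _

theorem IsLeaf.eq_singleton {gs : Multiset X} {e : X} (he : IsLeaf r e) (h : r gs e) :
    gs = {e} :=
  not_not.1 fun hne => he ⟨gs, h, hne⟩

theorem IsLeaf.eq_of_descends {f e : X} (he : IsLeaf r e) (h : descends r f e) : f = e := by
  obtain ⟨gs, hgs, hf⟩ := h
  simpa [he.eq_singleton hgs] using hf

theorem upTuple.not_isLeaf {ts : Multiset X} {e : X} (h : upTuple r e ts) : ¬ IsLeaf r e :=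
  fun he => he ⟨ts, h.1⟩

theorem upTuple.strictDescends (hr : IsPreBroad r) (hs : Simple r) {ts : Multiset X} {e t : X}
    (h : upTuple r e ts) (ht : t ∈ ts) : StrictDescends r t e :=
  ⟨⟨ts, h.1.1, ht⟩, by rintro rfl; exact h.1.2 (eq_singleton_of_self_mem hr hs h.1.1 ht)⟩

theorem upTuple.exists_mem_descends {ts : Multiset X} {e f : X} (h : upTuple r e ts)
    (hf : descends r f e) (hfe : f ≠ e) : ∃ t ∈ ts, descends r f t := by
  obtain ⟨gs, hgs, hfg⟩ := hf
  refine (h.2 gs hgs ?_).exists_descends hfg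
  rintro rfl
  exact hfe (Multiset.mem_singleton.1 hfg)

theorem exists_isLeafTuple [Finite X] (r : Rel X) (e : X) : ∃ ls, IsLeafTuple r e ls :=
  ⟨(Set.toFinite {l | IsLeaf r l ∧ descends r l e}).toFinset.val, Finset.nodup _, by simp⟩

theorem IsLeafTuple.eq_of_tupleLE {ls fs : Multiset X} {e : X} (hls : IsLeafTuple r e ls)
    (h : tupleLE r fs ls) : fs = ls :=
  eq_of_tupleLE_of_forall_isLeaf (fun l hl => ((hls.2 l).1 hl).1) h

theorem IsLeafTuple.eq_singleton_of_isLeaf (hr : IsPreBroad r) {ls : Multiset X} {e : X}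
    (hls : IsLeafTuple r e ls) (he : IsLeaf r e) : ls = {e} := by
  refine (Multiset.Nodup.ext hls.1 (Multiset.nodup_singleton e)).2 fun l => ?_
  rw [hls.2, Multiset.mem_singleton]
  exact ⟨fun hl => he.eq_of_descends hl.2, by rintro rfl; exact ⟨he, descends_refl hr l⟩⟩

theorem isMinTuple_of_isLeafTuple [Finite X] (hr : IsBroad r) (hs : Simple r)
    (hn : ∀ e, IsLeaf r e ∨ ∃ ts, upTuple r e ts) {L : X → Multiset X}
    (hL : ∀ x, IsLeafTuple r x (L x)) (e : X) : IsMinTuple r e (L e) := by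
  induction e using (wellFounded_strictDescends hr hs).induction with
  | _ e ih =>
  rcases hn e with he | ⟨ts, hts⟩
  · rw [(hL e).eq_singleton_of_isLeaf hr.1 he]
    refine ⟨hr.1.1 e, fun gs hgs => ?_⟩
    rw [he.eq_singleton hgs]
    exact tupleLE_singleton (hr.1.1 e)
  have hchild := fun t ht => ih t (hts.strictDescends hr.1 hs ht)
  have hrel : r (ts.bind L) e := rel_bind hr.1.2 hts.1.1 fun t ht => (hchild t ht).1
  have hLe : L e = ts.bind L := by
    refine (Multiset.Nodup.ext (hL e).1 (hs _ _ hrel)).2 fun l => ?_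
    simp only [(hL e).2, Multiset.mem_bind, (hL _).2]
    constructor
    · rintro ⟨hl, hle⟩
      obtain ⟨t, ht, hlt⟩ :=
        hts.exists_mem_descends hle (by rintro rfl; exact hts.not_isLeaf hl)
      exact ⟨t, ht, hl, hlt⟩
    · rintro ⟨t, ht, hl, hlt⟩
      exact ⟨hl, descends_trans hr.1 hlt (hts.strictDescends hr.1 hs ht).1⟩
  refine hLe ▸ ⟨hrel, fun gs hgs => ?_⟩
  by_cases hgse : gs = {e}
  · exact hgse ▸ tupleLE_singleton hrel
  · exact (hts.2 gs hgs hgse).bind_le fun t ht => (hchild t ht).2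

theorem pairwise_incomp_iff (hr : IsPreBroad r) {fs : Multiset X} :
    fs.Pairwise (Incomp r) ↔ fs.Nodup ∧ IsAntichain (descends r) {f | f ∈ fs} := by
  refine ⟨fun h => ⟨?_, ?_⟩, fun ⟨hnd, hanti⟩ => hnd.pairwise fun a ha b hb hab =>
    ⟨hanti ha hb hab, hanti hb ha hab.symm⟩⟩
  · obtain ⟨l, rfl, hl⟩ := h
    exact Multiset.coe_nodup.2
      (hl.imp fun hab heq => by subst heq; exact hab.1 (descends_refl hr _))
  · have : Std.Symm (Incomp r) := ⟨fun _ _ hab => ⟨hab.2, hab.1⟩⟩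
    exact fun a ha b hb hab => (h.forall ha hb hab).1

theorem isAntichain_of_rel (hr : IsPreBroad r) (hs : Simple r) {fs : Multiset X} {e : X}
    (h : r fs e) : IsAntichain (descends r) {f | f ∈ fs} :=
  fun _ ha _ hb hab => not_descends_of_rel hr hs h ha hb hab

theorem bind_eq_of_rel (hr : IsPreBroad r) (hs : Simple r) {L : X → Multiset X}
    (hL : ∀ x, IsLeafTuple r x (L x)) (hmin : ∀ x, IsMinTuple r x (L x)) {fs : Multiset X}
    {e : X} (h : r fs e) : fs.bind L = L e := by
  refine (Multiset.Nodup.ext (hs _ _ (rel_bind hr.2 h fun f _ => (hmin f).1)) (hL e).1).2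
    fun l => ?_
  simp only [Multiset.mem_bind, (hL _).2]
  constructor
  · rintro ⟨f, hf, hl, hlf⟩
    exact ⟨hl, descends_trans hr hlf ⟨fs, h, hf⟩⟩
  · rintro ⟨hl, hle⟩
    obtain ⟨f, hf, hlf⟩ := ((hmin e).2 fs h).exists_descends ((hL e).2 l |>.2 ⟨hl, hle⟩)
    exact ⟨f, hf, hl, hlf⟩

open Classical in
theorem upTuple.bind_filter_descends (hr : IsPreBroad r) (hs : Simple r)
    {ts fs : Multiset X} {e : X} (hts : upTuple r e ts) (hnd : fs.Nodup)
    (hfs : ∀ f ∈ fs, StrictDescends r f e) :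
    ts.bind (fun t => fs.filter (descends r · t)) = fs := by
  refine (Multiset.Nodup.ext (Multiset.nodup_bind.2 ⟨fun t _ => hnd.filter _, ?_⟩) hnd).2
    fun f => ?_
  · refine (hs _ _ hts.1.1).pairwise fun t ht t' ht' hne => Multiset.disjoint_left.2 ?_
    intro f hft hft'
    exact hne (eq_of_descends_of_descends hr hs hts.1.1 ht ht' (Multiset.mem_filter.1 hft).2
      (Multiset.mem_filter.1 hft').2)
  · simp only [Multiset.mem_bind, Multiset.mem_filter]
    refine ⟨fun ⟨_, _, hf, _⟩ => hf, fun hf => ?_⟩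
    obtain ⟨t, ht, hft⟩ := hts.exists_mem_descends (hfs f hf).1 (hfs f hf).2
    exact ⟨t, ht, hf, hft⟩

open Classical in
theorem upTuple.bind_filter_descends_eq (hr : IsPreBroad r) (hs : Simple r)
    {ts fs : Multiset X} {e t : X} {L : X → Multiset X} (hL : ∀ x, IsLeafTuple r x (L x))
    (hts : upTuple r e ts) (ht : t ∈ ts) (hfs : ∀ f ∈ fs, StrictDescends r f e) (heq : fs.bind L = L e) :
    (fs.filter (descends r · t)).bind L = L t := by
  have hte : descends r t e := (hts.strictDescends hr hs ht).1
  calc (fs.filter (descends r · t)).bind L = (fs.bind L).filter (descends r · t) := by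
        rw [Multiset.filter_bind, Multiset.bind_filter]
        refine Multiset.bind_congr fun f hf => ?_
        split_ifs with hft
        · exact (Multiset.filter_eq_self.2 fun l hl =>
            descends_trans hr ((hL f).2 l |>.1 hl).2 hft).symm
        · refine (Multiset.filter_eq_nil.2 fun l hl hlt => hft ?_).symm
          obtain ⟨t', ht', hft'⟩ := hts.exists_mem_descends (hfs f hf).1 (hfs f hf).2
          have hlf := ((hL f).2 l |>.1 hl).2
          rwa [eq_of_descends_of_descends hr hs hts.1.1 ht ht' hlt (descends_trans hr hlf hft')]
    _ = (L e).filter (descends r · t) := by rw [heq]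
    _ = L t := by
        refine (Multiset.Nodup.ext ((hL e).1.filter _) (hL t).1).2 fun l => ?_
        simp only [Multiset.mem_filter, (hL _).2]
        exact ⟨fun ⟨⟨hl, _⟩, hlt⟩ => ⟨hl, hlt⟩,
          fun ⟨hl, hlt⟩ => ⟨⟨hl, descends_trans hr hlt hte⟩, hlt⟩⟩

theorem eq_singleton_of_isAntichain {fs : Multiset X} {e : X}
    (hfs : ∀ f ∈ fs, descends r f e) (hnd : fs.Nodup)
    (hanti : IsAntichain (descends r) {f | f ∈ fs}) (he : e ∈ fs) : fs = {e} := by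
  refine (Multiset.Nodup.ext hnd (Multiset.nodup_singleton e)).2 fun f => ?_
  rw [Multiset.mem_singleton]
  exact ⟨fun hf => by_contra fun hne => hanti hf he hne (hfs f hf), fun hfe => hfe ▸ he⟩

theorem rel_of_bind_eq [Finite X] (hr : IsBroad r) (hs : Simple r)
    (hn : ∀ e, IsLeaf r e ∨ ∃ ts, upTuple r e ts) {L : X → Multiset X}
    (hL : ∀ x, IsLeafTuple r x (L x)) (e : X) {fs : Multiset X}
    (hfs : ∀ f ∈ fs, descends r f e) (hnd : fs.Nodup)
    (hanti : IsAntichain (descends r) {f | f ∈ fs}) (heq : fs.bind L = L e) : r fs e := by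
  classical
  induction e using (wellFounded_strictDescends hr hs).induction generalizing fs with
  | _ e ih =>
  by_cases he : e ∈ fs
  · rw [eq_singleton_of_isAntichain hfs hnd hanti he]
    exact hr.1.1 e
  have hstrict : ∀ f ∈ fs, StrictDescends r f e := fun f hf =>
    ⟨hfs f hf, fun h => he (h ▸ hf)⟩
  rcases hn e with hleaf | ⟨ts, hts⟩
  · -- a leaf lies in its own leaf tuple, hence below some `f ∈ fs`, which must be `e` itself
    obtain ⟨f, hf, hef⟩ :=
      Multiset.mem_bind.1 (heq ▸ (hL e).2 e |>.2 ⟨hleaf, descends_refl hr.1 e⟩)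
    exact absurd (descends_antisymm hr hs (hfs f hf) ((hL f).2 e |>.1 hef).2 ▸ hf) he
  rw [← hts.bind_filter_descends hr.1 hs hnd hstrict]
  refine rel_bind hr.1.2 hts.1.1 fun t ht => ih t (hts.strictDescends hr.1 hs ht)
    (fun f hf => (Multiset.mem_filter.1 hf).2) (hnd.filter _)
    (hanti.subset fun f hf => Multiset.mem_of_mem_filter hf)
    (hts.bind_filter_descends_eq hr.1 hs hL ht hstrict heq)

end

/-- In a tree, each edge `e` has a minimum tuple `e^λ ≤ e`,
consisting exactly of the leaves `l ≤_d e`; moreover `f₁ ⋯ fₙ ≤ e` holds iff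
all `fᵢ ≤_d e`, the `fᵢ` are pairwise `≤_d`-incomparable, and
`f₁^λ ⋯ fₙ^λ = e^λ`. -/
theorem stmt4 {X : Type u} (r : Rel X) (ht : IsTree r) :
    (∀ e : X, ∃ ls : Multiset X,
      (r ls e ∧ ∀ gs, r gs e → tupleLE r ls gs) ∧
      ls.Nodup ∧ ∀ l, l ∈ ls ↔ IsLeaf r l ∧ descends r l e) ∧
    (∀ lam : X → Multiset X,
      (∀ x, r (lam x) x ∧ ∀ gs, r gs x → tupleLE r (lam x) gs) →
      ∀ fs e, (r fs e ↔
        (∀ f ∈ fs, descends r f e) ∧ fs.Pairwise (Incomp r) ∧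
          (fs.map lam).sum = lam e)) := by
  obtain ⟨hr, hfin, hs, hn, -⟩ := ht
  choose L hL using exists_isLeafTuple r
  have hmin : ∀ x, IsMinTuple r x (L x) := isMinTuple_of_isLeafTuple hr hs hn hL
  refine ⟨fun e => ⟨L e, hmin e, hL e⟩, fun lam hlam fs e => ?_⟩
  obtain rfl : lam = L := funext fun x => (hL x).eq_of_tupleLE ((hlam x).2 _ (hmin x).1)
  rw [pairwise_incomp_iff hr.1]
  exact ⟨fun h => ⟨fun f hf => ⟨fs, h, hf⟩, ⟨hs _ _ h, isAntichain_of_rel hr.1 hs h⟩,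
      bind_eq_of_rel hr.1 hs hL hmin h⟩,
    fun ⟨hfs, ⟨hnd, hanti⟩, heq⟩ => rel_of_bind_eq hr hs hn hL e hfs hnd hanti heq⟩

end BroadPaper
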